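/- arXiv:2108.05345 — 5 statements merged into one kernel-verified Lean document; each statement's English description precedes it below -/
import Mathlib

section
/- Let A be a real m×n matrix satisfying the restricted isometry property of order 2s with constant δ_{2s} < 1. Then for any b ∈ ℝ^m there is at most one vector x with Ax = b and ‖x‖₀ ≤ s; that is, if Ax = Ax' = b with ‖x‖₀ ≤ s and ‖x'‖₀ ≤ s, then x = x'. -/
open scoped Matrix

/-- The ℓ0 "norm": number of nonzero entries. -/
noncomputable def l0norm {n : ℕ} (x : Fin n → ℝ) : ℕ :=
  {i : Fin n | x i ≠ 0}.ncard

/-- If `A` satisfies the restricted isometry property of order `2s` with constant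
`δ < 1`, then for any `b` there is at most one `s`-sparse solution of `Ax = b`. -/
theorem stmt_2 {m n : ℕ} (s : ℕ) (A : Matrix (Fin m) (Fin n) ℝ) (δ : ℝ)
    (hδ0 : 0 < δ) (hδ1 : δ < 1)
    (hRIP : ∀ y : Fin n → ℝ, l0norm y ≤ 2 * s →
      (1 - δ) * (∑ i, (y i) ^ 2) ≤ (∑ j, ((A *ᵥ y) j) ^ 2) ∧
      (∑ j, ((A *ᵥ y) j) ^ 2) ≤ (1 + δ) * (∑ i, (y i) ^ 2))
    (b : Fin m → ℝ) (x x' : Fin n → ℝ)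
    (hx : A *ᵥ x = b) (hx' : A *ᵥ x' = b)
    (hxs : l0norm x ≤ s) (hx's : l0norm x' ≤ s) :
    x = x' := by
  set y := x - x' with hy
  have hsub : {i : Fin n | y i ≠ 0} ⊆ {i : Fin n | x i ≠ 0} ∪ {i : Fin n | x' i ≠ 0} := by
    intro i hi
    simp only [Set.mem_setOf_eq, Set.mem_union, hy, Pi.sub_apply] at *
    by_contra h
    push_neg at h
    rw [h.1, h.2, sub_zero] at hi
    exact hi rfl
  have hyl0 : l0norm y ≤ 2 * s := by
    calc l0norm y ≤ ({i : Fin n | x i ≠ 0} ∪ {i : Fin n | x' i ≠ 0}).ncard :=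
          Set.ncard_le_ncard hsub ((Set.toFinite _).union (Set.toFinite _))
      _ ≤ {i : Fin n | x i ≠ 0}.ncard + {i : Fin n | x' i ≠ 0}.ncard :=
          Set.ncard_union_le _ _
      _ ≤ s + s := add_le_add hxs hx's
      _ = 2 * s := (two_mul s).symm
  have hAy : A *ᵥ y = 0 := by
    rw [hy, Matrix.mulVec_sub, hx, hx', sub_self]
  have h1 := (hRIP y hyl0).1
  rw [hAy] at h1
  simp only [Pi.zero_apply, ne_eq, OfNat.ofNat_ne_zero, not_false_eq_true, zero_pow,
    Finset.sum_const_zero] at h1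
  have hpos : 0 < 1 - δ := by linarith
  have hsum : ∑ i, (y i) ^ 2 ≤ 0 := nonpos_of_mul_nonpos_right (by linarith) hpos |>.trans le_rfl
  have hsum0 : ∑ i, (y i) ^ 2 = 0 :=
    le_antisymm hsum (Finset.sum_nonneg fun i _ => sq_nonneg _)
  have : ∀ i, y i = 0 := by
    intro i
    have := (Finset.sum_eq_zero_iff_of_nonneg (fun i _ => sq_nonneg (y i))).mp hsum0 i
      (Finset.mem_univ i)
    exact pow_eq_zero_iff (by norm_num) |>.mp this
  funext i
  have := this i
  simpa [hy, sub_eq_zero] using this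
end

section
/- Let A be a real m×n matrix satisfying the restricted isometry property of order 2s with constant δ_{2s} < √2 − 1, and let x̄ ∈ ℝ^n satisfy A x̄ = b and ‖x̄‖₀ ≤ s. Then x̄ is the unique minimizer of ‖x‖₁ over the set {x ∈ ℝ^n : Ax = b}; in particular the solution of the minimum-ℓ1 problem also solves the minimum-ℓ0 problem. -/
open scoped Matrix

/-- The ℓ1 norm of a vector. -/
def l1norm {n : ℕ} (x : Fin n → ℝ) : ℝ := ∑ i, |x i|

/-!
Put `h = x - x̄ ∈ ker A` and let `T` be the support of `x̄`. If `‖x‖₁ ≤ ‖x̄‖₁` then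
`‖h_{Tᶜ}‖₁ ≤ ‖h_T‖₁`. Cut `Tᶜ` into blocks `T₁, T₂, …` of `s` indices in decreasing order of
`|h|`: every entry of a block is at most the mean of the previous one, so
`∑_{j ≥ 2} ‖h_{T_j}‖₂ ≤ ‖h_{Tᶜ}‖₁ / √s ≤ ‖h_T‖₂`. By RIP, `A` is `δ`-almost orthogonal on
disjointly supported `s`-sparse vectors, hence
`(1 - δ) ‖h_{T ∪ T₁}‖₂² ≤ ‖A h_{T ∪ T₁}‖₂² = -∑_{j ≥ 2} ⟨A h_{T ∪ T₁}, A h_{T_j}⟩`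
`≤ √2 δ ‖h_{T ∪ T₁}‖₂²`.
As `1 - δ > √2 δ`, `h_T = 0`, and then `h = 0`. A solution sparser than `x̄` would itself be the
unique ℓ1-minimizer, which gives minimality in ℓ0.
-/

open Finset Function Matrix

def IsRIP {m n : ℕ} (A : Matrix (Fin m) (Fin n) ℝ) (k : ℕ) (δ : ℝ) : Prop :=
  ∀ y : Fin n → ℝ, l0norm y ≤ k →
    (1 - δ) * (y ⬝ᵥ y) ≤ A *ᵥ y ⬝ᵥ A *ᵥ y ∧ A *ᵥ y ⬝ᵥ A *ᵥ y ≤ (1 + δ) * (y ⬝ᵥ y)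

theorem l0norm_le_card {n : ℕ} {y : Fin n → ℝ} {T : Finset (Fin n)} (hy : support y ⊆ T) :
    l0norm y ≤ T.card :=
  (Set.ncard_le_ncard hy T.finite_toSet).trans_eq (Set.ncard_coe_finset T)

theorem dotProduct_eq_zero_of_disjoint_support {ι R : Type*} [Fintype ι]
    [NonUnitalNonAssocSemiring R] {u v : ι → R} (h : Disjoint (support u) (support v)) :
    u ⬝ᵥ v = 0 :=
  Finset.sum_eq_zero fun i _ => by
    by_cases hu : u i = 0
    · simp [hu]
    · simp [notMem_support.mp (Set.disjoint_left.mp h hu)]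

theorem dotProduct_self_indicator {ι : Type*} [Fintype ι] (T : Finset ι) (f : ι → ℝ) :
    Set.indicator T f ⬝ᵥ Set.indicator T f = ∑ i ∈ T, f i ^ 2 := by
  rw [dotProduct, ← sum_indicator_subset _ (subset_univ T)]
  refine sum_congr rfl fun i _ => ?_
  by_cases hi : i ∈ T <;> simp [hi, sq]

theorem sum_abs_le_sqrt_card_mul_sqrt_sum_sq {ι : Type*} (S : Finset ι) (f : ι → ℝ) :
    ∑ i ∈ S, |f i| ≤ √(S.card : ℝ) * √(∑ i ∈ S, f i ^ 2) := by
  simpa using Real.sum_mul_le_sqrt_mul_sqrt S 1 (fun i => |f i|)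

theorem sqrt_mul_sqrt_sum_sq_le {ι : Type*} {S : Finset ι} {f : ι → ℝ} {c τ : ℝ} (hc : 0 < c)
    (hS : (S.card : ℝ) ≤ c) (hτ : 0 ≤ τ) (hf : ∀ i ∈ S, c * |f i| ≤ τ) :
    √c * √(∑ i ∈ S, f i ^ 2) ≤ τ := by
  rw [← Real.sqrt_mul hc.le, Real.sqrt_le_left hτ]
  have hsq : ∀ i ∈ S, c ^ 2 * f i ^ 2 ≤ τ ^ 2 := fun i hi => by
    rw [← sq_abs (f i), ← mul_pow]
    exact pow_le_pow_left₀ (by positivity) (hf i hi) 2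
  refine le_of_mul_le_mul_left ?_ hc
  calc c * (c * ∑ i ∈ S, f i ^ 2) = ∑ i ∈ S, c ^ 2 * f i ^ 2 := by rw [mul_sum, mul_sum]; ring_nf
    _ ≤ S.card * τ ^ 2 := by simpa using sum_le_card_nsmul S _ _ hsq
    _ ≤ c * τ ^ 2 := by gcongr

theorem exists_subset_card_eq_forall_le {ι α : Type*} [DecidableEq ι] [LinearOrder α] (f : ι → α)
    (R : Finset ι) {k : ℕ} (hk : k ≤ R.card) :
    ∃ S ⊆ R, S.card = k ∧ ∀ i ∈ S, ∀ j ∈ R \ S, f j ≤ f i := by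
  induction k with
  | zero => exact ⟨∅, empty_subset R, rfl, by simp⟩
  | succ k ih =>
    obtain ⟨S, hSR, hScard, hS⟩ := ih (by omega)
    have hne : (R \ S).Nonempty := by
      rw [← card_pos, card_sdiff_of_subset hSR]
      omega
    obtain ⟨j, hj, hjmax⟩ := exists_max_image (R \ S) f hne
    refine ⟨insert j S, insert_subset (mem_sdiff.mp hj).1 hSR, ?_, ?_⟩
    · rw [card_insert_of_notMem (mem_sdiff.mp hj).2, hScard]
    · intro i hi l hl
      have hl' : l ∈ R \ S := sdiff_subset_sdiff le_rfl (subset_insert j S) hl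
      rcases mem_insert.mp hi with rfl | hi
      · exact hjmax l hl'
      · exact hS i hi l hl'

theorem exists_subset_card_eq_min_mul_le_sum {ι : Type*} [DecidableEq ι] (f : ι → ℝ)
    (R : Finset ι) (s : ℕ) :
    ∃ S ⊆ R, S.card = min s R.card ∧ ∀ i ∈ R \ S, s * f i ≤ ∑ j ∈ S, f j := by
  obtain ⟨S, hSR, hScard, hS⟩ := exists_subset_card_eq_forall_le f R (min_le_right s R.card)
  refine ⟨S, hSR, hScard, fun i hi => ?_⟩
  rcases le_total s R.card with hs | hs
  · rw [min_eq_left hs] at hScard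
    simpa [hScard] using card_nsmul_le_sum S f (f i) fun j hj => hS j hj i hi
  · rw [min_eq_right hs] at hScard
    rw [eq_of_subset_of_card_le hSR hScard.ge, sdiff_self] at hi
    exact absurd hi (notMem_empty i)

theorem sum_compl_abs_le_of_l1norm_add_le {n : ℕ} {x h : Fin n → ℝ} {T : Finset (Fin n)}
    (hx : support x ⊆ T) (hle : l1norm (x + h) ≤ l1norm x) :
    ∑ i ∈ Tᶜ, |h i| ≤ ∑ i ∈ T, |h i| := by
  have hxT : ∀ i ∈ Tᶜ, x i = 0 := fun i hi =>
    notMem_support.mp fun h' => (mem_compl.mp hi) (hx h')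
  have hsplit : ∀ g : Fin n → ℝ, l1norm g = ∑ i ∈ T, |g i| + ∑ i ∈ Tᶜ, |g i| := fun g =>
    (sum_add_sum_compl T _).symm
  have hcompl : ∑ i ∈ Tᶜ, |(x + h) i| = ∑ i ∈ Tᶜ, |h i| :=
    sum_congr rfl fun i hi => by simp [hxT i hi]
  have hcompl' : ∑ i ∈ Tᶜ, |x i| = 0 := sum_eq_zero fun i hi => by simp [hxT i hi]
  rw [hsplit, hsplit, hcompl, hcompl'] at hle
  have htriangle : ∑ i ∈ T, |x i| ≤ ∑ i ∈ T, |(x + h) i| + ∑ i ∈ T, |h i| := by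
    rw [← sum_add_distrib]
    exact sum_le_sum fun i _ => by simpa using abs_sub (x i + h i) (h i)
  linarith

theorem eq_zero_of_one_sub_mul_sq_add_sq_le {δ a b : ℝ} (hδ0 : 0 ≤ δ) (hδ : δ < √2 - 1)
    (h : (1 - δ) * (a ^ 2 + b ^ 2) ≤ δ * (a * (a + b))) : a = 0 := by
  have h2 : √2 ^ 2 = 2 := Real.sq_sqrt (by norm_num)
  -- `(1 + √2) / 2` is the largest eigenvalue of the quadratic form `a * (a + b)`
  have hform : a * (a + b) ≤ (1 + √2) / 2 * (a ^ 2 + b ^ 2) := by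
    nlinarith [sq_nonneg (a - (√2 + 1) * b), Real.sqrt_nonneg 2]
  have hδform : δ * (1 + (1 + √2) / 2) < 1 := by nlinarith [Real.sqrt_nonneg 2]
  have : a ^ 2 + b ^ 2 ≤ 0 := by nlinarith [mul_le_mul_of_nonneg_left hform hδ0]
  nlinarith

theorem eq_zero_of_sum_compl_abs_le_of_sum_abs_nonpos {ι : Type*} [Fintype ι] [DecidableEq ι]
    {h : ι → ℝ} {T : Finset ι} (hcone : ∑ i ∈ Tᶜ, |h i| ≤ ∑ i ∈ T, |h i|)
    (hT : ∑ i ∈ T, |h i| ≤ 0) : h = 0 := by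
  have hsum : ∑ i, |h i| = 0 := le_antisymm (by rw [← sum_add_sum_compl T]; linarith)
    (sum_nonneg fun i _ => abs_nonneg (h i))
  ext i
  simpa using (sum_eq_zero_iff_of_nonneg fun i _ => abs_nonneg (h i)).mp hsum i (mem_univ i)

theorem dotProduct_mulVec_indicator_union_self {ι κ : Type*} [Fintype ι] [Fintype κ]
    [DecidableEq ι] {A : Matrix κ ι ℝ} {h : ι → ℝ} (hAh : A *ᵥ h = 0) {T T' : Finset ι}
    (hTT' : Disjoint T T') :
    A *ᵥ Set.indicator (T ∪ T' : Finset ι) h ⬝ᵥ A *ᵥ Set.indicator (T ∪ T' : Finset ι) h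
      = -(A *ᵥ Set.indicator T h ⬝ᵥ A *ᵥ Set.indicator ((T ∪ T')ᶜ : Finset ι) h)
        - A *ᵥ Set.indicator T' h ⬝ᵥ A *ᵥ Set.indicator ((T ∪ T')ᶜ : Finset ι) h := by
  have hcompl : A *ᵥ Set.indicator (T ∪ T' : Finset ι) h
      = -(A *ᵥ Set.indicator ((T ∪ T')ᶜ : Finset ι) h) := by
    rw [eq_neg_iff_add_eq_zero, ← mulVec_add, coe_compl, Set.indicator_self_add_compl, hAh]
  conv_lhs => arg 2; rw [hcompl]
  rw [dotProduct_neg, coe_union, Set.indicator_union_of_disjoint (disjoint_coe.mpr hTT'),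
    ← Pi.add_def, mulVec_add, add_dotProduct]
  ring

namespace IsRIP

variable {m n : ℕ} {A : Matrix (Fin m) (Fin n) ℝ} {k s : ℕ} {δ : ℝ}

theorem two_mul_abs_dotProduct_le (hA : IsRIP A k δ) {u v : Fin n → ℝ} {U V : Finset (Fin n)}
    (hu : support u ⊆ U) (hv : support v ⊆ V) (hUV : Disjoint U V) (hk : U.card + V.card ≤ k) :
    2 * |A *ᵥ u ⬝ᵥ A *ᵥ v| ≤ δ * (u ⬝ᵥ u + v ⬝ᵥ v) := by
  have huv : u ⬝ᵥ v = 0 :=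
    dotProduct_eq_zero_of_disjoint_support ((disjoint_coe.mpr hUV).mono hu hv)
  have hsparse : ∀ w : Fin n → ℝ, support w ⊆ support u ∪ support v → l0norm w ≤ k :=
    fun w hw => (l0norm_le_card (T := U ∪ V) (by
      rw [coe_union]; exact hw.trans (Set.union_subset_union hu hv))).trans
      ((card_union_le U V).trans hk)
  have hadd := hA (u + v) (hsparse _ (support_add u v))
  have hsub := hA (u - v) (hsparse _ (support_sub u v))
  simp only [mulVec_add, mulVec_sub, add_dotProduct, dotProduct_add, sub_dotProduct,
    dotProduct_sub, dotProduct_comm v u, dotProduct_comm (A *ᵥ v) (A *ᵥ u), huv] at hadd hsub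
  cases abs_cases (A *ᵥ u ⬝ᵥ A *ᵥ v) <;> linarith

theorem abs_dotProduct_le (hA : IsRIP A k δ) {u v : Fin n → ℝ} {U V : Finset (Fin n)}
    (hu : support u ⊆ U) (hv : support v ⊆ V) (hUV : Disjoint U V) (hk : U.card + V.card ≤ k) :
    |A *ᵥ u ⬝ᵥ A *ᵥ v| ≤ δ * √(u ⬝ᵥ u) * √(v ⬝ᵥ v) := by
  set a := √(u ⬝ᵥ u)
  set b := √(v ⬝ᵥ v)
  have ha2 : a ^ 2 = u ⬝ᵥ u := Real.sq_sqrt (sum_nonneg fun i _ => mul_self_nonneg (u i))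
  have hb2 : b ^ 2 = v ⬝ᵥ v := Real.sq_sqrt (sum_nonneg fun i _ => mul_self_nonneg (v i))
  rcases (mul_nonneg (Real.sqrt_nonneg _) (Real.sqrt_nonneg _) : 0 ≤ a * b).eq_or_lt with hab | hab
  · rcases mul_eq_zero.mp hab.symm with h0 | h0
    · rw [h0, sq, zero_mul, eq_comm, dotProduct_self_eq_zero] at ha2
      simp [ha2, h0]
    · rw [h0, sq, zero_mul, eq_comm, dotProduct_self_eq_zero] at hb2
      simp [hb2, h0]
  -- scaling `u` by `‖v‖` and `v` by `‖u‖` balances the two sides of the AM-GM bound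
  have hscaled := hA.two_mul_abs_dotProduct_le ((support_const_smul_subset b u).trans hu)
    ((support_const_smul_subset a v).trans hv) hUV hk
  simp only [mulVec_smul, smul_dotProduct, dotProduct_smul, smul_eq_mul, abs_mul,
    ← ha2, ← hb2] at hscaled
  rw [abs_of_nonneg (Real.sqrt_nonneg _ : 0 ≤ a), abs_of_nonneg (Real.sqrt_nonneg _ : 0 ≤ b)]
    at hscaled
  refine le_of_mul_le_mul_left ?_ hab
  linarith

theorem sqrt_mul_abs_dotProduct_indicator_le (hA : IsRIP A (2 * s) δ) (hδ : 0 ≤ δ) (hs : 0 < s)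
    {u : Fin n → ℝ} {U : Finset (Fin n)} (hu : support u ⊆ U) (hU : U.card ≤ s)
    (h : Fin n → ℝ) (R : Finset (Fin n)) (hUR : Disjoint U R) (τ : ℝ) (hτ : 0 ≤ τ)
    (hRτ : ∀ i ∈ R, s * |h i| ≤ τ) :
    √s * |A *ᵥ u ⬝ᵥ A *ᵥ Set.indicator R h| ≤ δ * √(u ⬝ᵥ u) * (τ + ∑ i ∈ R, |h i|) := by
  induction R using Finset.strongInduction generalizing τ with
  | H R ih =>
  rcases R.eq_empty_or_nonempty with rfl | hR
  · rw [coe_empty, Set.indicator_empty', mulVec_zero, dotProduct_zero, abs_zero, mul_zero,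
      sum_empty, add_zero]
    exact mul_nonneg (mul_nonneg hδ (Real.sqrt_nonneg _)) hτ
  -- peel off a block `S` of the largest entries; its ℓ1 mass bounds `s` times the rest
  obtain ⟨S, hSR, hScard, hSR'⟩ := exists_subset_card_eq_min_mul_le_sum (fun i => |h i|) R s
  have hS : S.Nonempty := by
    rw [← card_pos, hScard]
    exact lt_min hs hR.card_pos
  have hsplit : Set.indicator R h = Set.indicator S h + Set.indicator (R \ S : Finset _) h := by
    conv_lhs => rw [← union_sdiff_of_subset hSR, coe_union]
    exact Set.indicator_union_of_disjoint (disjoint_coe.mpr disjoint_sdiff) h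
  have hhead : √s * |A *ᵥ u ⬝ᵥ A *ᵥ Set.indicator S h| ≤ δ * √(u ⬝ᵥ u) * τ := by
    have hSs : S.card ≤ s := hScard.trans_le (min_le_left _ _)
    calc √s * |A *ᵥ u ⬝ᵥ A *ᵥ Set.indicator S h|
        ≤ √s * (δ * √(u ⬝ᵥ u) * √(∑ i ∈ S, h i ^ 2)) := by
          rw [← dotProduct_self_indicator]
          gcongr
          exact hA.abs_dotProduct_le hu Set.support_indicator_subset (hUR.mono_right hSR)
            (by omega)
      _ = δ * √(u ⬝ᵥ u) * (√s * √(∑ i ∈ S, h i ^ 2)) := by ring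
      _ ≤ δ * √(u ⬝ᵥ u) * τ := by
          gcongr
          exact sqrt_mul_sqrt_sum_sq_le (by exact_mod_cast hs) (by exact_mod_cast hSs) hτ
            fun i hi => hRτ i (hSR hi)
  have htail := ih (R \ S) (sdiff_ssubset hSR hS) (hUR.mono_right sdiff_subset) _
    (sum_nonneg fun i _ => abs_nonneg (h i)) hSR'
  rw [hsplit, mulVec_add, dotProduct_add, ← sum_sdiff hSR]
  calc √s * |A *ᵥ u ⬝ᵥ A *ᵥ Set.indicator S h
          + A *ᵥ u ⬝ᵥ A *ᵥ Set.indicator (R \ S : Finset _) h|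
      ≤ √s * |A *ᵥ u ⬝ᵥ A *ᵥ Set.indicator S h|
        + √s * |A *ᵥ u ⬝ᵥ A *ᵥ Set.indicator (R \ S : Finset _) h| := by
        rw [← mul_add]
        gcongr
        exact abs_add_le _ _
    _ ≤ δ * √(u ⬝ᵥ u) * τ + δ * √(u ⬝ᵥ u) * (∑ i ∈ S, |h i| + ∑ i ∈ R \ S, |h i|) :=
        add_le_add hhead htail
    _ = _ := by ring

theorem abs_dotProduct_indicator_le (hA : IsRIP A (2 * s) δ) (hδ : 0 ≤ δ) (hs : 0 < s)
    {h : Fin n → ℝ} {U R T : Finset (Fin n)} (hU : U.card ≤ s) (hUR : Disjoint U R)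
    (hRT : ∀ i ∈ R, s * |h i| ≤ ∑ j ∈ T, |h j|) {c : ℝ}
    (hc : ∑ i ∈ T, |h i| + ∑ i ∈ R, |h i| ≤ √s * c) :
    |A *ᵥ Set.indicator U h ⬝ᵥ A *ᵥ Set.indicator R h| ≤ δ * √(∑ i ∈ U, h i ^ 2) * c := by
  have hbound := hA.sqrt_mul_abs_dotProduct_indicator_le hδ hs
    (Set.support_indicator_subset (f := h)) hU h R hUR _
    (sum_nonneg fun i _ => abs_nonneg (h i)) hRT
  rw [dotProduct_self_indicator] at hbound
  refine le_of_mul_le_mul_left ?_ (Real.sqrt_pos.mpr (Nat.cast_pos.mpr hs))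
  calc _ ≤ _ := hbound
    _ ≤ δ * √(∑ i ∈ U, h i ^ 2) * (√s * c) := by gcongr
    _ = _ := by ring

theorem sum_abs_nonpos_of_mulVec_eq_zero (hA : IsRIP A (2 * s) δ) (hδ0 : 0 ≤ δ)
    (hδ : δ < √2 - 1) {h : Fin n → ℝ} (hAh : A *ᵥ h = 0) {T : Finset (Fin n)} (hT : T.card ≤ s)
    (hcone : ∑ i ∈ Tᶜ, |h i| ≤ ∑ i ∈ T, |h i|) : ∑ i ∈ T, |h i| ≤ 0 := by
  rcases Nat.eq_zero_or_pos s with rfl | hs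
  · simp [card_eq_zero.mp (Nat.le_zero.mp hT)]
  obtain ⟨T1, hT1, hT1card, hdom⟩ := exists_subset_card_eq_min_mul_le_sum (fun i => |h i|) Tᶜ s
  have hT1s : T1.card ≤ s := hT1card.trans_le (min_le_left _ _)
  have hTT1 : Disjoint T T1 := disjoint_of_subset_right hT1 disjoint_compl_right
  have hR : Tᶜ \ T1 = (T ∪ T1)ᶜ := by rw [compl_union, sdiff_eq_inter_compl]
  set a := √(∑ i ∈ T, h i ^ 2)
  set b := √(∑ i ∈ T1, h i ^ 2)
  have hsa : ∑ i ∈ T, |h i| ≤ √s * a :=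
    (sum_abs_le_sqrt_card_mul_sqrt_sum_sq T h).trans (by gcongr)
  have hℓ1 : ∑ i ∈ T1, |h i| + ∑ i ∈ (T ∪ T1)ᶜ, |h i| ≤ √s * a := by
    rw [← hR, add_comm, sum_sdiff hT1]
    exact hcone.trans hsa
  rw [hR] at hdom
  have hcrossT := hA.abs_dotProduct_indicator_le hδ0 hs hT
    (disjoint_compl_right.mono_left subset_union_left) hdom hℓ1
  have hcrossT1 := hA.abs_dotProduct_indicator_le hδ0 hs hT1s
    (disjoint_compl_right.mono_left subset_union_right) hdom hℓ1
  have hlower := (hA _ ((l0norm_le_card (Set.support_indicator_subset (f := h))).trans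
    ((card_union_le T T1).trans (by omega)))).1
  have ha2 : a ^ 2 = ∑ i ∈ T, h i ^ 2 := Real.sq_sqrt (sum_nonneg fun i _ => sq_nonneg (h i))
  have hb2 : b ^ 2 = ∑ i ∈ T1, h i ^ 2 := Real.sq_sqrt (sum_nonneg fun i _ => sq_nonneg (h i))
  rw [dotProduct_mulVec_indicator_union_self hAh hTT1, dotProduct_self_indicator,
    sum_union hTT1, ← ha2, ← hb2] at hlower
  have ha0 : a = 0 := eq_zero_of_one_sub_mul_sq_add_sq_le hδ0 hδ (b := b) (by
    linarith [neg_abs_le (A *ᵥ Set.indicator T h ⬝ᵥ A *ᵥ Set.indicator ((T ∪ T1)ᶜ : Finset _) h),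
      neg_abs_le (A *ᵥ Set.indicator T1 h ⬝ᵥ A *ᵥ Set.indicator ((T ∪ T1)ᶜ : Finset _) h)])
  simpa [ha0] using hsa

theorem l1norm_lt_of_l0norm_le (hA : IsRIP A (2 * s) δ) (hδ0 : 0 ≤ δ) (hδ : δ < √2 - 1)
    {xbar x : Fin n → ℝ} (hsparse : l0norm xbar ≤ s) (hx : A *ᵥ x = A *ᵥ xbar)
    (hne : x ≠ xbar) : l1norm xbar < l1norm x := by
  classical
  by_contra! hle
  set T := (support xbar).toFinset
  have hT : T.card ≤ s := by rwa [← Set.ncard_eq_toFinset_card']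
  have hker : A *ᵥ (x - xbar) = 0 := by rw [mulVec_sub, hx, sub_self]
  have hcone := sum_compl_abs_le_of_l1norm_add_le (Set.coe_toFinset (support xbar)).ge
    (h := x - xbar) (by rwa [add_sub_cancel])
  have hT0 := hA.sum_abs_nonpos_of_mulVec_eq_zero hδ0 hδ hker hT hcone
  exact hne (sub_eq_zero.mp (eq_zero_of_sum_compl_abs_le_of_sum_abs_nonpos hcone hT0))

end IsRIP

/-- If `A` satisfies the RIP of order `2s` with constant `δ < √2 − 1` and `x̄` is an
`s`-sparse solution of `Ax = b`, then `x̄` is the unique minimizer of `‖x‖₁` over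
`{x : Ax = b}`; in particular the minimum-ℓ1 solution also solves the minimum-ℓ0 problem. -/
theorem stmt_3 {m n : ℕ} (s : ℕ) (A : Matrix (Fin m) (Fin n) ℝ) (δ : ℝ)
    (hδ0 : 0 < δ) (hδ : δ < Real.sqrt 2 - 1)
    (hRIP : ∀ y : Fin n → ℝ, l0norm y ≤ 2 * s →
      (1 - δ) * (∑ i, (y i) ^ 2) ≤ (∑ j, ((A *ᵥ y) j) ^ 2) ∧
      (∑ j, ((A *ᵥ y) j) ^ 2) ≤ (1 + δ) * (∑ i, (y i) ^ 2))
    (b : Fin m → ℝ) (xbar : Fin n → ℝ)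
    (hxbar : A *ᵥ xbar = b) (hsparse : l0norm xbar ≤ s) :
    (∀ x : Fin n → ℝ, A *ᵥ x = b → x ≠ xbar → l1norm xbar < l1norm x) ∧
    (∀ x : Fin n → ℝ, A *ᵥ x = b → l0norm xbar ≤ l0norm x) := by
  have hA : IsRIP A (2 * s) δ := by simpa only [IsRIP, dotProduct, ← sq] using hRIP
  have hmin : ∀ y, A *ᵥ y = b → l0norm y ≤ s →
      ∀ x, A *ᵥ x = b → x ≠ y → l1norm y < l1norm x := fun y hy hys x hx hne =>
    hA.l1norm_lt_of_l0norm_le hδ0.le hδ hys (hx.trans hy.symm) hne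
  refine ⟨hmin xbar hxbar hsparse, fun x hx => ?_⟩
  by_contra! hlt
  have hne : x ≠ xbar := by
    rintro rfl
    exact lt_irrefl _ hlt
  -- a sparser solution would itself be the unique ℓ1-minimizer
  exact lt_asymm (hmin xbar hxbar hsparse x hx hne)
    (hmin x hx (hlt.le.trans hsparse) xbar hxbar hne.symm)
end

section
/- Let A be a real m×n matrix, b ∈ ℝ^m, and let P and J be disjoint subsets of {1,…,n} with J nonempty, such that the columns of A indexed by P ∪ J are linearly independent. Let x ∈ ℝ^n with x_i = 0 for every i ∉ P, and set w = Aᵀ(b − Ax). Assume w_i = 0 for every i ∈ P and w_j > 0 for every j ∈ J. Let y be the minimizer of ‖Az − b‖₂ over {z ∈ ℝ^n : z_i = 0 for i ∉ P ∪ J}, and assume y_j > 0 for every j ∈ J. Then ‖Ay − b‖₂ < ‖Ax − b‖₂. -/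
open scoped Matrix

/-- Euclidean (ℓ2) norm of a vector in ℝ^m. -/
noncomputable def l2norm {m : ℕ} (v : Fin m → ℝ) : ℝ :=
  Real.sqrt (∑ i, (v i) ^ 2)

/-- Strict objective decrease in an outer iteration of LHDM: with `P, J` disjoint,
`J ≠ ∅`, columns indexed by `P ∪ J` linearly independent, `x` supported on `P`,
`w = Aᵀ(b − Ax)` vanishing on `P` and positive on `J`, and `y` the least squares
minimizer over vectors supported on `P ∪ J` with `yⱼ > 0` on `J`, one has
`‖Ay − b‖₂ < ‖Ax − b‖₂`. -/
theorem stmt_8 {m n : ℕ} (A : Matrix (Fin m) (Fin n) ℝ) (b : Fin m → ℝ)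
    (P J : Set (Fin n)) (hdisj : Disjoint P J) (hJ : J.Nonempty)
    (hli : LinearIndependent ℝ (fun j : ↥(P ∪ J) => Aᵀ (j : Fin n)))
    (x : Fin n → ℝ) (hx : ∀ i ∉ P, x i = 0)
    (hwP : ∀ i ∈ P, (Aᵀ *ᵥ (b - A *ᵥ x)) i = 0)
    (hwJ : ∀ j ∈ J, 0 < (Aᵀ *ᵥ (b - A *ᵥ x)) j)
    (y : Fin n → ℝ) (hy : ∀ i ∉ P ∪ J, y i = 0)
    (hymin : ∀ z : Fin n → ℝ, (∀ i ∉ P ∪ J, z i = 0) →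
      l2norm (A *ᵥ y - b) ≤ l2norm (A *ᵥ z - b))
    (hyJ : ∀ j ∈ J, 0 < y j) :
    l2norm (A *ᵥ y - b) < l2norm (A *ᵥ x - b) := by
  classical
  set w : Fin n → ℝ := Aᵀ *ᵥ (b - A *ᵥ x) with hwdef
  set d : Fin n → ℝ := y - x with hddef
  -- nonnegativity of each term d i * w i
  have hterm_nonneg : ∀ i : Fin n, 0 ≤ d i * w i := by
    intro i
    by_cases hiP : i ∈ P
    · rw [hwP i hiP, mul_zero]
    by_cases hiJ : i ∈ J
    · have hxi : x i = 0 := hx i hiP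
      have hdi : d i = y i := by simp [hddef, hxi]
      exact le_of_lt (mul_pos (hdi ▸ hyJ i hiJ) (hwJ i hiJ))
    · have hiPJ : i ∉ P ∪ J := by simp [hiP, hiJ]
      have : d i = 0 := by simp [hddef, hx i hiP, hy i hiPJ]
      rw [this, zero_mul]
  obtain ⟨j, hjJ⟩ := hJ
  have hterm_pos : 0 < d j * w j := by
    have hjP : j ∉ P := fun h => (Set.disjoint_left.mp hdisj h) hjJ
    have hxj : x j = 0 := hx j hjP
    have hdj : d j = y j := by simp [hddef, hxj]
    exact mul_pos (hdj ▸ hyJ j hjJ) (hwJ j hjJ)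
  set S : ℝ := ∑ i, d i * w i with hSdef
  have hS : 0 < S :=
    Finset.sum_pos' (fun i _ => hterm_nonneg i) ⟨j, Finset.mem_univ j, hterm_pos⟩
  set u : Fin m → ℝ := A *ᵥ d with hudef
  set Q : ℝ := ∑ i, u i ^ 2 with hQdef
  have hQ : 0 ≤ Q := Finset.sum_nonneg fun i _ => sq_nonneg _
  set t : ℝ := S / (Q + 1) with htdef
  have ht : 0 < t := div_pos hS (by positivity)
  set z : Fin n → ℝ := x + t • d with hzdef
  have hzsupp : ∀ i ∉ P ∪ J, z i = 0 := by
    intro i hi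
    have hiP : i ∉ P := fun h => hi (Or.inl h)
    simp [hzdef, hddef, hx i hiP, hy i hi]
  set r : Fin m → ℝ := A *ᵥ x - b with hrdef
  -- key dot product identity: ∑ u i * r i = -S
  have hur : ∑ i, u i * r i = -S := by
    have h1 : ∑ i, u i * r i = r ⬝ᵥ (A *ᵥ d) := by
      rw [dotProduct_comm]; rfl
    rw [h1, Matrix.dotProduct_mulVec, ← Matrix.mulVec_transpose]
    have h2 : Aᵀ *ᵥ r = -w := by
      rw [hrdef, hwdef, ← Matrix.mulVec_neg, neg_sub]
    rw [h2]
    have : (-w) ⬝ᵥ d = -(w ⬝ᵥ d) := by simp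
    rw [this, hSdef]
    congr 1
    simp only [dotProduct]
    exact Finset.sum_congr rfl fun i _ => mul_comm _ _
  have hAz : A *ᵥ z - b = fun i => r i + t * u i := by
    funext i
    simp [hzdef, hrdef, hudef, Matrix.mulVec_add, Matrix.mulVec_smul]
    ring
  have hexp : ∑ i, (A *ᵥ z - b) i ^ 2
      = (∑ i, r i ^ 2) + 2 * t * (∑ i, u i * r i) + t ^ 2 * Q := by
    rw [hAz, hQdef, Finset.mul_sum, Finset.mul_sum, ← Finset.sum_add_distrib,
      ← Finset.sum_add_distrib]
    exact Finset.sum_congr rfl fun i _ => by ring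
  have htQ : t * Q < 2 * S := by
    rw [htdef, div_mul_eq_mul_div, div_lt_iff₀ (by positivity)]
    nlinarith
  have hlt : ∑ i, (A *ᵥ z - b) i ^ 2 < ∑ i, (A *ᵥ x - b) i ^ 2 := by
    have hxr : ∑ i, (A *ᵥ x - b) i ^ 2 = ∑ i, r i ^ 2 := by rw [hrdef]
    rw [hexp, hur, hxr]
    nlinarith [mul_lt_mul_of_pos_left htQ ht]
  have hzx : l2norm (A *ᵥ z - b) < l2norm (A *ᵥ x - b) := by
    unfold l2norm
    exact Real.sqrt_lt_sqrt (Finset.sum_nonneg fun i _ => sq_nonneg _) hlt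
  exact lt_of_le_of_lt (hymin z hzsupp) hzx
end

section
/- Let A be a real m×n matrix, b ∈ ℝ^m, λ ∈ ℝ, and let u, v ∈ ℝ^n satisfy u ≥ 0, v ≥ 0 and u_i v_i = 0 for every i. Set x = u − v. Then (Σ_i u_i + Σ_i v_i)² + ‖λA u − λA v − λ b‖₂² = ‖x‖₁² + λ²‖Ax − b‖₂². In other words, the squared residual of the stacked nonnegative least squares system with matrix whose first row is all ones and remaining block is (λA −λA), and right-hand side (0; λb), applied to (u; v), equals the penalized objective ‖x‖₁² + λ²‖Ax − b‖₂². -/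
open scoped Matrix

/-- The ℓ1-NNLS identity: for `u, v ≥ 0` with `uᵢvᵢ = 0` and `x = u − v`,
`(Σᵢ uᵢ + Σᵢ vᵢ)² + ‖λAu − λAv − λb‖₂² = ‖x‖₁² + λ²‖Ax − b‖₂²`. -/
theorem stmt_12 {m n : ℕ} (A : Matrix (Fin m) (Fin n) ℝ) (b : Fin m → ℝ) (lam : ℝ)
    (u v : Fin n → ℝ) (hu : 0 ≤ u) (hv : 0 ≤ v)
    (hcomp : ∀ i, u i * v i = 0) :
    ((∑ i, u i) + ∑ i, v i) ^ 2
        + ∑ j, (lam * (A *ᵥ u) j - lam * (A *ᵥ v) j - lam * b j) ^ 2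
      = (l1norm (u - v)) ^ 2 + lam ^ 2 * ∑ j, ((A *ᵥ (u - v)) j - b j) ^ 2 := by
  have h1 : l1norm (u - v) = (∑ i, u i) + ∑ i, v i := by
    unfold l1norm
    rw [← Finset.sum_add_distrib]
    refine Finset.sum_congr rfl fun i _ => ?_
    have hui : 0 ≤ u i := by simpa using hu i
    have hvi : 0 ≤ v i := by simpa using hv i
    have := hcomp i
    rcases mul_eq_zero.mp this with h | h <;> simp [Pi.sub_apply, h, hui, hvi,
      abs_of_nonneg, abs_of_nonpos (neg_nonpos.mpr hvi)]
  rw [h1, Matrix.mulVec_sub, Finset.mul_sum]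
  congr 1
  refine Finset.sum_congr rfl fun j _ => ?_
  simp [Pi.sub_apply]
  ring
end

section
/- Let A = (a₁ … a_n) be a real m×n matrix, b ∈ ℝ^m, and let P ⊆ {1,…,n} be such that the columns of A indexed by P are linearly independent. Let x be the minimizer of ‖Az − b‖₂ over {z : z_i = 0 for i ∉ P}, and set r = b − Ax. Let j ∉ P be an index such that a_jᵀ r > 0 and such that the columns of A indexed by P ∪ {j} are linearly independent. Then the minimizer y of ‖Az − b‖₂ over {z : z_i = 0 for i ∉ P ∪ {j}} satisfies y_j > 0. -/
set_option maxHeartbeats 1000000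

open scoped Matrix

lemma quad_zero (s c : ℝ) (hs : 0 ≤ s) (h : ∀ t : ℝ, 0 ≤ 2*t*c + t^2*s) : c = 0 := by
  have hs1 : (0:ℝ) < s + 1 := by linarith
  have h1 := h (-c / (s+1))
  have h2 : 0 ≤ (2*(-c/(s+1))*c + (-c/(s+1))^2*s) * (s+1)^2 :=
    mul_nonneg h1 (by positivity)
  have h3 : (2*(-c/(s+1))*c + (-c/(s+1))^2*s) * (s+1)^2 = -c^2*(s+2) := by
    field_simp
    ring
  rw [h3] at h2
  have hc2 : c^2 = 0 := by nlinarith [sq_nonneg c]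
  exact pow_eq_zero_iff (by norm_num) |>.mp hc2

lemma expand {m : ℕ} (u v : Fin m → ℝ) (t : ℝ) :
    ∑ i, (u i + t * v i)^2
      = ∑ i, (u i)^2 + 2*t*(∑ i, v i * u i) + t^2 * ∑ i, (v i)^2 := by
  rw [Finset.mul_sum, Finset.mul_sum, ← Finset.sum_add_distrib, ← Finset.sum_add_distrib]
  exact Finset.sum_congr rfl fun i _ => by ring

lemma swap_sum {m n : ℕ} (A : Matrix (Fin m) (Fin n) ℝ) (d : Fin n → ℝ) (u : Fin m → ℝ) :
    ∑ i, (A *ᵥ d) i * u i = ∑ k, d k * (∑ i, A i k * u i) := by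
  simp only [Matrix.mulVec, dotProduct, Finset.sum_mul, Finset.mul_sum]
  rw [Finset.sum_comm]
  exact Finset.sum_congr rfl fun k _ => Finset.sum_congr rfl fun i _ => by ring

/-- Single-column-insertion positivity (Lemma 23.17 of Lawson–Hanson): if `x`
minimizes `‖Az − b‖₂` over vectors supported on `P` (columns of `A` on `P` being
linearly independent), `r = b − Ax`, and `j ∉ P` satisfies `aⱼᵀ r > 0` with the
columns on `P ∪ {j}` linearly independent, then the minimizer `y` over vectors
supported on `P ∪ {j}` satisfies `yⱼ > 0`. -/
theorem stmt_15 {m n : ℕ} (A : Matrix (Fin m) (Fin n) ℝ) (b : Fin m → ℝ)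
    (P : Set (Fin n))
    (hliP : LinearIndependent ℝ (fun i : P => Aᵀ (i : Fin n)))
    (x : Fin n → ℝ) (hx0 : ∀ i ∉ P, x i = 0)
    (hxmin : ∀ z : Fin n → ℝ, (∀ i ∉ P, z i = 0) →
      l2norm (A *ᵥ x - b) ≤ l2norm (A *ᵥ z - b))
    (j : Fin n) (hj : j ∉ P)
    (hw : 0 < ∑ i, A i j * (b - A *ᵥ x) i)
    (hli : LinearIndependent ℝ (fun i : ↥(P ∪ {j}) => Aᵀ (i : Fin n)))
    (y : Fin n → ℝ) (hy0 : ∀ i ∉ P ∪ {j}, y i = 0)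
    (hymin : ∀ z : Fin n → ℝ, (∀ i ∉ P ∪ {j}, z i = 0) →
      l2norm (A *ᵥ y - b) ≤ l2norm (A *ᵥ z - b)) :
    0 < y j := by
  classical
  set u : Fin m → ℝ := A *ᵥ x - b with hu
  -- convert sqrt inequalities to sum inequalities
  have conv : ∀ z1 z2 : Fin n → ℝ,
      l2norm (A *ᵥ z1 - b) ≤ l2norm (A *ᵥ z2 - b) →
      ∑ i, ((A *ᵥ z1 - b) i)^2 ≤ ∑ i, ((A *ᵥ z2 - b) i)^2 := by
    intro z1 z2 h
    unfold l2norm at h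
    have h1 : (0:ℝ) ≤ ∑ i, ((A *ᵥ z1 - b) i)^2 := Finset.sum_nonneg fun i _ => sq_nonneg _
    have h2 : (0:ℝ) ≤ ∑ i, ((A *ᵥ z2 - b) i)^2 := Finset.sum_nonneg fun i _ => sq_nonneg _
    nlinarith [Real.sq_sqrt h1, Real.sq_sqrt h2, Real.sqrt_nonneg (∑ i, ((A *ᵥ z1 - b) i)^2), Real.sqrt_nonneg (∑ i, ((A *ᵥ z2 - b) i)^2)]
  -- expansion of objective at x + t • d
  have exp1 : ∀ (d : Fin n → ℝ) (t : ℝ),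
      ∑ i, ((A *ᵥ (x + t • d) - b) i)^2
        = ∑ i, (u i)^2 + 2*t*(∑ i, (A *ᵥ d) i * u i) + t^2 * ∑ i, ((A *ᵥ d) i)^2 := by
    intro d t
    have : ∀ i, (A *ᵥ (x + t • d) - b) i = u i + t * (A *ᵥ d) i := by
      intro i
      simp only [Matrix.mulVec_add, Matrix.mulVec_smul, Pi.sub_apply, Pi.add_apply,
        Pi.smul_apply, smul_eq_mul, hu]
      ring
    rw [Finset.sum_congr rfl fun i _ => by rw [this i]]
    exact expand u (A *ᵥ d) t
  -- normal equations for x on P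
  have normal : ∀ i0 ∈ P, ∑ i, A i i0 * u i = 0 := by
    intro i0 hi0
    apply quad_zero (∑ i, ((A *ᵥ (Pi.single i0 1 : Fin n → ℝ)) i)^2) _ (Finset.sum_nonneg fun i _ => sq_nonneg _)
    intro t
    have hfeas : ∀ i ∉ P, (x + t • (Pi.single i0 1 : Fin n → ℝ)) i = 0 := by
      intro i hi
      have : i ≠ i0 := fun h => hi (h ▸ hi0)
      simp [hx0 i hi, Pi.single_eq_of_ne this]
    have := conv _ _ (hxmin _ hfeas)
    rw [exp1 ((Pi.single i0 1 : Fin n → ℝ)) t] at this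
    have hAe : ∀ i, (A *ᵥ (Pi.single i0 1 : Fin n → ℝ)) i = A i i0 := by
      intro i; simp [Matrix.mulVec_single]
    have e1 : ∑ i, (A *ᵥ (Pi.single i0 1 : Fin n → ℝ)) i * u i = ∑ i, A i i0 * u i :=
      Finset.sum_congr rfl fun i _ => by rw [hAe i]
    rw [e1] at this
    linarith
  set w := ∑ i, A i j * (b - A *ᵥ x) i with hwdef
  have hcj : ∑ i, A i j * u i = -w := by
    rw [hwdef, ← Finset.sum_neg_distrib]
    exact Finset.sum_congr rfl fun i _ => by simp [hu]; ring
  -- x is feasible for the big problem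
  have hxfeas : ∀ i ∉ P ∪ {j}, x i = 0 := fun i hi => hx0 i (fun h => hi (Set.mem_union_left _ h))
  have hFyx : ∑ i, ((A *ᵥ y - b) i)^2 ≤ ∑ i, ((A *ᵥ x - b) i)^2 := conv _ _ (hymin x hxfeas)
  -- write y = x + 1 • (y - x) and compute inner term
  have hyd : y = x + (1:ℝ) • (y - x) := by simp
  have hFy : ∑ i, ((A *ᵥ y - b) i)^2
      = ∑ i, (u i)^2 + 2*1*(∑ i, (A *ᵥ (y - x)) i * u i) + 1^2 * ∑ i, ((A *ᵥ (y - x)) i)^2 := by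
    have h := exp1 (y - x) 1
    rw [← hyd] at h
    exact h
  have hS : ∑ i, (A *ᵥ (y - x)) i * u i = y j * (-w) := by
    rw [swap_sum]
    rw [Finset.sum_eq_single j]
    · have : x j = 0 := hx0 j hj
      rw [hcj]; simp [this]
    · intro k _ hk
      by_cases hkP : k ∈ P
      · rw [normal k hkP]; ring
      · have : y k = 0 := hy0 k (by
          intro hmem
          rcases hmem with h | h
          · exact hkP h
          · exact hk h)
        have : (y - x) k = 0 := by simp [this, hx0 k hkP]
        rw [this]; ring
    · intro h; exact absurd (Finset.mem_univ j) h
  have hT : (0:ℝ) ≤ ∑ i, ((A *ᵥ (y - x)) i)^2 := Finset.sum_nonneg fun i _ => sq_nonneg _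
  -- from hFyx : 2 * (y j * (-w)) + T ≤ 0, hence y j * w ≥ T/2 ≥ 0, so y j ≥ 0
  have hFx : ∑ i, ((A *ᵥ x - b) i)^2 = ∑ i, (u i)^2 := by rw [hu]
  have key : 2 * (y j * (-w)) + ∑ i, ((A *ᵥ (y - x)) i)^2 ≤ 0 := by
    rw [hFy, hS, hFx] at hFyx; linarith
  have hyj_nonneg : 0 ≤ y j := by
    have h1 : 0 ≤ y j * w := by linarith
    nlinarith
  rcases lt_or_eq_of_le hyj_nonneg with h | h
  · exact h
  -- y j = 0 case: y is feasible for small problem, so F x ≤ F y hence F x = F y, contradiction via w = 0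
  exfalso
  have hyj0 : y j = 0 := h.symm
  have hyfeasP : ∀ i ∉ P, y i = 0 := by
    intro i hi
    by_cases hij : i = j
    · rw [hij, hyj0]
    · exact hy0 i (by rintro (h' | h'); exacts [hi h', hij h'])
  have hFxy : ∑ i, ((A *ᵥ x - b) i)^2 ≤ ∑ i, ((A *ᵥ y - b) i)^2 := conv _ _ (hxmin y hyfeasP)
  -- consider z = x + t • e_j, feasible for the big problem
  have hw0 : (∑ i, A i j * u i) = 0 := by
    apply quad_zero (∑ i, ((A *ᵥ (Pi.single j 1 : Fin n → ℝ)) i)^2) _ (Finset.sum_nonneg fun i _ => sq_nonneg _)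
    intro t
    have hfeas : ∀ i ∉ P ∪ {j}, (x + t • (Pi.single j 1 : Fin n → ℝ)) i = 0 := by
      intro i hi
      have hij : i ≠ j := fun h' => hi (Set.mem_union_right _ h')
      have hiP : i ∉ P := fun h' => hi (Set.mem_union_left _ h')
      simp [hx0 i hiP, Pi.single_eq_of_ne hij]
    have hle := conv _ _ (hymin _ hfeas)
    have hle2 : ∑ i, ((A *ᵥ x - b) i)^2 ≤ ∑ i, ((A *ᵥ (x + t • (Pi.single j 1 : Fin n → ℝ)) - b) i)^2 :=
      le_trans hFxy hle
    rw [exp1 ((Pi.single j 1 : Fin n → ℝ)) t, hFx] at hle2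
    have hAe : ∀ i, (A *ᵥ (Pi.single j 1 : Fin n → ℝ)) i = A i j := by
      intro i; simp [Matrix.mulVec_single]
    have e1 : ∑ i, (A *ᵥ (Pi.single j 1 : Fin n → ℝ)) i * u i = ∑ i, A i j * u i :=
      Finset.sum_congr rfl fun i _ => by rw [hAe i]
    rw [e1] at hle2
    linarith
  rw [hcj] at hw0
  linarith
end
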